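/- arXiv:math/9502232 — 4 statements merged into one kernel-verified Lean document; each statement's English description precedes it below -/
import Mathlib

section
/- If a forcing iteration P * Q̇ has a dense subset R that is <λ-closed (closed under increasing chains of every length less than λ), then P is <λ-strategically closed. -/
universe u

open Cardinal

def Ordinal.IsEvenStage (α : Ordinal) : Prop :=
  ∃ (l : Ordinal) (n : ℕ), (l = 0 ∨ Order.IsSuccLimit l) ∧ Even n ∧ α = l + n

def FollowsStrategy {P : Type u} (le : P → P → Prop)
    (σ : (α : Ordinal) → ((β : Ordinal) → β < α → P) → P) (α : Ordinal)
    (f : (β : Ordinal) → β < α → P) : Prop :=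
  (∀ (β γ : Ordinal) (hβ : β < α) (hγ : γ < β), le (f γ (hγ.trans hβ)) (f β hβ)) ∧
  (∀ (β : Ordinal) (hβ : β < α), β.IsEvenStage →
    f β hβ = σ β (fun γ hγ => f γ (hγ.trans hβ)))

/-- Player II has a strategy for the increasing-sequence game of length `κ`
(II playing even and limit stages) which ensures the game can always be
continued. -/
def GameStratClosed {P : Type u} (le : P → P → Prop) (κ : Ordinal) : Prop :=
  ∃ σ : (α : Ordinal) → ((β : Ordinal) → β < α → P) → P,
    ∀ (α : Ordinal), α < κ → ∀ f : (β : Ordinal) → β < α → P,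
      FollowsStrategy le σ α f → α.IsEvenStage →
      ∀ (β : Ordinal) (hβ : β < α), le (f β hβ) (σ α f)

/-- A `P`-name `Q̇` for a partial order, presented via the forced ordering
relation:  `fle p q₁ q₂` means `p ⊩ q₁ ≤ q₂`. -/
structure NameOrder (P : Type u) [Preorder P] : Type (u + 1) where
  Q : Type u
  fle : P → Q → Q → Prop
  fle_mono : ∀ {p p' : P} {q q' : Q}, fle p q q' → p ≤ p' → fle p' q q'
  fle_refl : ∀ (p : P) (q : Q), fle p q q
  fle_trans : ∀ {p : P} {q₁ q₂ q₃ : Q}, fle p q₁ q₂ → fle p q₂ q₃ → fle p q₁ q₃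

/-- The two-step iteration `P * Q̇`, ordered coordinatewise with the second
coordinate compared after forcing with the first. -/
def NameOrder.iterLE {P : Type u} [Preorder P] (N : NameOrder P)
    (x y : P × N.Q) : Prop :=
  x.1 ≤ y.1 ∧ N.fle y.1 x.2 y.2

namespace DCIAux

theorem iterLE_refl {P : Type u} [Preorder P] (N : NameOrder P) (x : P × N.Q) :
    N.iterLE x x := ⟨le_refl _, N.fle_refl _ _⟩

theorem iterLE_trans {P : Type u} [Preorder P] (N : NameOrder P) {x y z : P × N.Q}
    (h1 : N.iterLE x y) (h2 : N.iterLE y z) : N.iterLE x z :=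
  ⟨h1.1.trans h2.1, N.fle_trans (N.fle_mono h1.2 h2.1) h2.2⟩

theorem evenStage_zero : (0 : Ordinal).IsEvenStage := ⟨0, 0, Or.inl rfl, Even.zero, by simp⟩

theorem evenStage_limit {α : Ordinal} (h : Order.IsSuccLimit α) : α.IsEvenStage :=
  ⟨α, 0, Or.inr h, Even.zero, by simp⟩

theorem evenStage_add_two {α : Ordinal} (h : α.IsEvenStage) : (α + 2).IsEvenStage := by
  obtain ⟨l, n, h1, h2, rfl⟩ := h
  refine ⟨l, n + 2, h1, ?_, ?_⟩
  · rcases h2 with ⟨m, hm⟩; exact ⟨m + 1, by omega⟩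
  · push_cast; rw [← add_assoc]

theorem parity_unique : ∀ α l : Ordinal, ∀ n : ℕ, ∀ l' : Ordinal, ∀ n' : ℕ,
    (l = 0 ∨ Order.IsSuccLimit l) → (l' = 0 ∨ Order.IsSuccLimit l') → α = l + n → α = l' + n' →
    (Even n ↔ Even n') := by
  intro α
  induction α using Ordinal.induction with
  | h α IH =>
    intro l n l' n' hl hl' h1 h2
    cases n with
    | zero =>
      cases n' with
      | zero => simp
      | succ k =>
        exfalso
        simp only [Nat.cast_zero, add_zero] at h1
        have hs : α = Order.succ (l' + k) := by
          rw [h2]; push_cast; rw [← add_assoc, Ordinal.add_one_eq_succ]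
        rcases hl with h0 | hlim
        · exact Ordinal.succ_ne_zero _ (by rw [← hs, h1, h0])
        · rw [← h1, hs] at hlim; exact Order.not_isSuccLimit_succ _ hlim
    | succ k =>
      cases n' with
      | zero =>
        exfalso
        simp only [Nat.cast_zero, add_zero] at h2
        have hs : α = Order.succ (l + k) := by
          rw [h1]; push_cast; rw [← add_assoc, Ordinal.add_one_eq_succ]
        rcases hl' with h0 | hlim
        · exact Ordinal.succ_ne_zero _ (by rw [← hs, h2, h0])
        · rw [← h2, hs] at hlim; exact Order.not_isSuccLimit_succ _ hlim
      | succ k' =>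
        have e1 : α = Order.succ (l + k) := by
          rw [h1]; push_cast; rw [← add_assoc, Ordinal.add_one_eq_succ]
        have e2 : α = Order.succ (l' + k') := by
          rw [h2]; push_cast; rw [← add_assoc, Ordinal.add_one_eq_succ]
        have hlk : l + (k : Ordinal) = l' + k' := Order.succ_injective (by rw [← e1, ← e2])
        have hlt : l + (k : Ordinal) < α := by
          rw [e1]; exact Order.lt_succ_of_not_isMax (not_isMax _)
        have := IH _ hlt l k l' k' hl hl' rfl hlk
        rw [Nat.even_add_one, Nat.even_add_one]
        exact not_congr this

theorem not_evenStage_succ {γ : Ordinal} (h : γ.IsEvenStage) : ¬ (γ + 1).IsEvenStage := by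
  obtain ⟨l, n, hl, hn, rfl⟩ := h
  rintro ⟨l', n', hl', hn', heq⟩
  have h1 : l + (n : Ordinal) + 1 = l + ((n + 1 : ℕ) : Ordinal) := by push_cast; rw [← add_assoc]
  have hiff := parity_unique (l + (n : Ordinal) + 1) l (n + 1) l' n' hl hl' h1 heq
  have h2 := hiff.mpr hn'
  rw [Nat.even_add_one] at h2
  exact h2 hn

theorem evenStage_cases {α : Ordinal} (h : α.IsEvenStage) :
    α = 0 ∨ Order.IsSuccLimit α ∨ ∃ γ, γ.IsEvenStage ∧ α = γ + 2 := by
  obtain ⟨l, n, hl, hn, rfl⟩ := h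
  cases n with
  | zero =>
    simp only [Nat.cast_zero, add_zero]
    exact hl.imp id Or.inl
  | succ k =>
    cases k with
    | zero => exact absurd hn (by simp)
    | succ m =>
      refine Or.inr (Or.inr ⟨l + m, ⟨l, m, hl, ?_, rfl⟩, ?_⟩)
      · rcases hn with ⟨j, hj⟩; exact ⟨j - 1, by omega⟩
      · push_cast; simp only [add_assoc, one_add_one_eq_two]

theorem even_or_succ_even : ∀ β : Ordinal, ∃ γ, γ.IsEvenStage ∧ (β = γ ∨ β = γ + 1) := by
  intro β
  induction β using Ordinal.limitRecOn with
  | zero => exact ⟨0, evenStage_zero, Or.inl rfl⟩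
  | add_one γ IH =>
    obtain ⟨e, he, hc⟩ := IH
    rcases hc with h | h
    · exact ⟨e, he, Or.inr (by rw [h, Ordinal.add_one_eq_succ])⟩
    · refine ⟨e + 2, evenStage_add_two he, Or.inl ?_⟩
      rw [h, add_assoc, one_add_one_eq_two]
  | limit γ hγ _ => exact ⟨γ, evenStage_limit hγ, Or.inl rfl⟩

open Classical in
noncomputable def auxA {P : Type u} [Preorder P] (N : NameOrder P) (R : Set (P × N.Q))
    (r₀ : P × N.Q) : (α : Ordinal) → ((β : Ordinal) → β < α → P) → P × N.Q
  | α, f =>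
    if h : ∃ r, r ∈ R ∧
        (∀ (β : Ordinal) (hβ : β < α), β.IsEvenStage →
          N.iterLE (auxA N R r₀ β (fun γ hγ => f γ (hγ.trans hβ))) r) ∧
        (∀ (β : Ordinal) (hβ : β < α), f β hβ ≤ r.1)
    then h.choose else r₀
  termination_by α _ => α
  decreasing_by all_goals exact hβ

/-- the candidate property -/
def Cand {P : Type u} [Preorder P] (N : NameOrder P) (R : Set (P × N.Q))
    (r₀ : P × N.Q) (α : Ordinal) (f : (β : Ordinal) → β < α → P) (r : P × N.Q) : Prop :=
  r ∈ R ∧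
    (∀ (β : Ordinal) (hβ : β < α), β.IsEvenStage →
      N.iterLE (auxA N R r₀ β (fun γ hγ => f γ (hγ.trans hβ))) r) ∧
    (∀ (β : Ordinal) (hβ : β < α), f β hβ ≤ r.1)

theorem auxA_spec {P : Type u} [Preorder P] (N : NameOrder P) (R : Set (P × N.Q))
    (r₀ : P × N.Q) (α : Ordinal) (f : (β : Ordinal) → β < α → P)
    (h : ∃ r, Cand N R r₀ α f r) : Cand N R r₀ α f (auxA N R r₀ α f) := by
  rw [auxA]
  split
  · next hh => exact hh.choose_spec
  · next hh => exact absurd h hh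

theorem auxA_congr {P : Type u} [Preorder P] (N : NameOrder P) (R : Set (P × N.Q))
    (r₀ : P × N.Q) {α₁ α₂ : Ordinal} (h : α₁ = α₂)
    (f₁ : (β : Ordinal) → β < α₁ → P) (f₂ : (β : Ordinal) → β < α₂ → P)
    (hf : ∀ (β : Ordinal) (h1 : β < α₁) (h2 : β < α₂), f₁ β h1 = f₂ β h2) :
    auxA N R r₀ α₁ f₁ = auxA N R r₀ α₂ f₂ := by
  subst h
  have : f₁ = f₂ := funext fun β => funext fun hb => hf β hb hb
  rw [this]

end DCIAux

open DCIAux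

/-- If the two-step iteration `P * Q̇` has a dense subset `R` which is
`<λ`-closed (every increasing chain of length `< λ` of elements of `R` has an
upper bound in `R`), then `P` is `<λ`-strategically closed, i.e.
`δ`-strategically closed for every cardinal `δ < λ`. -/
theorem dense_closed_iteration_implies_stratClosed {P : Type u} [Preorder P]
    (N : NameOrder P) (lam : Cardinal) (hlam : lam.IsRegular)
    (R : Set (P × N.Q))
    (hdense : ∀ x : P × N.Q, ∃ r ∈ R, N.iterLE x r)
    (hclosed : ∀ δ : Ordinal, δ < lam.ord →
      ∀ f : (β : Ordinal) → β < δ → P × N.Q,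
        (∀ (β : Ordinal) (hβ : β < δ), f β hβ ∈ R) →
        (∀ (β γ : Ordinal) (hβ : β < δ) (hγ : γ < β),
          N.iterLE (f γ (hγ.trans hβ)) (f β hβ)) →
        ∃ r ∈ R, ∀ (β : Ordinal) (hβ : β < δ), N.iterLE (f β hβ) r) :
    ∀ δ : Cardinal, δ < lam →
      GameStratClosed ((· ≤ ·) : P → P → Prop) (δ.ord + 1) := by
  intro δ hδ
  have h0lt : (0 : Ordinal) < lam.ord := by
    have h0 : (0 : Cardinal) < lam := lt_of_lt_of_le aleph0_pos hlam.aleph0_le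
    have := Cardinal.ord_lt_ord.mpr h0
    simpa using this
  obtain ⟨r₀, hr₀, -⟩ := hclosed 0 h0lt
    (fun β hβ => (not_lt_zero hβ).elim)
    (fun β hβ => (not_lt_zero hβ).elim)
    (fun β γ hβ hγ => (not_lt_zero hβ).elim)
  refine ⟨fun α f => (auxA N R r₀ α f).1, ?_⟩
  have main : ∀ α : Ordinal, α < lam.ord →
      ∀ f : (β : Ordinal) → β < α → P,
      FollowsStrategy ((· ≤ ·) : P → P → Prop)
        (fun α f => (auxA N R r₀ α f).1) α f → α.IsEvenStage →
      Cand N R r₀ α f (auxA N R r₀ α f) := by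
    intro α
    induction α using Ordinal.induction with
    | h α IH =>
      intro hα f hf hαe
      have hres : ∀ (e : Ordinal) (he : e < α),
          FollowsStrategy ((· ≤ ·) : P → P → Prop)
            (fun α f => (auxA N R r₀ α f).1) e (fun b hb => f b (hb.trans he)) :=
        fun e he => ⟨fun b c hb hc => hf.1 b c (hb.trans he) hc,
          fun b hb hbe => hf.2 b (hb.trans he) hbe⟩
      apply auxA_spec
      rcases evenStage_cases hαe with rfl | hlim | ⟨γ, hγe, hαeq⟩
      · exact ⟨r₀, hr₀, fun β hβ => (not_lt_zero hβ).elim,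
          fun β hβ => (not_lt_zero hβ).elim⟩
      · -- limit case
        have hsucc : ∀ β, β < α → β + 1 < α := fun β hb => by
          rw [Ordinal.add_one_eq_succ]; exact hlim.succ_lt hb
        obtain ⟨E, hE⟩ : ∃ E : Ordinal → Ordinal,
            ∀ β, (E β).IsEvenStage ∧ (β = E β ∨ β = E β + 1) :=
          ⟨fun β => (even_or_succ_even β).choose, fun β => (even_or_succ_even β).choose_spec⟩
        have hEle : ∀ β, E β ≤ β := fun β => by
          rcases (hE β).2 with h | h
          · exact h.ge
          · exact le_of_le_of_eq le_self_add h.symm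
        have hElt : ∀ β, β < α → E β < α := fun β hβ => (hEle β).trans_lt hβ
        have good : ∀ (e : Ordinal) (he : e < α), e.IsEvenStage →
            Cand N R r₀ e (fun b hb => f b (hb.trans he))
              (auxA N R r₀ e (fun b hb => f b (hb.trans he))) :=
          fun e he hee => IH e he (he.trans hα) _ (hres e he) hee
        have gchain : ∀ (β γ : Ordinal) (hβ : β < α) (hγ : γ < β),
            N.iterLE
              (auxA N R r₀ (E γ) (fun b hb => f b (hb.trans (hElt γ (hγ.trans hβ)))))
              (auxA N R r₀ (E β) (fun b hb => f b (hb.trans (hElt β hβ)))) := by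
          intro β γ hβ hγ
          have hle : E γ ≤ E β := by
            rcases (hE β).2 with h | h
            · exact (hEle γ).trans (le_of_lt (h ▸ hγ))
            · have hγE : γ ≤ E β := by
                rw [h, Ordinal.add_one_eq_succ] at hγ
                exact Order.lt_succ_iff.mp hγ
              exact (hEle γ).trans hγE
          rcases lt_or_eq_of_le hle with h | h
          · exact (good (E β) (hElt β hβ) (hE β).1).2.1 (E γ) h (hE γ).1
          · rw [auxA_congr N R r₀ h (fun b hb => f b (hb.trans (hElt γ (hγ.trans hβ))))
              (fun b hb => f b (hb.trans (hElt β hβ))) (fun _ _ _ => rfl)]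
            exact iterLE_refl N _
        obtain ⟨r, hrR, hub⟩ := hclosed α hα
          (fun β hβ => auxA N R r₀ (E β) (fun b hb => f b (hb.trans (hElt β hβ))))
          (fun β hβ => (good (E β) (hElt β hβ) (hE β).1).1)
          gchain
        have claimI : ∀ (e : Ordinal) (he : e < α), e.IsEvenStage →
            N.iterLE (auxA N R r₀ e (fun b hb => f b (hb.trans he))) r := by
          intro e he hee
          rcases (hE e).2 with h | h
          · rw [auxA_congr N R r₀ h (fun b hb => f b (hb.trans he))
              (fun b hb => f b (hb.trans (hElt e he))) (fun _ _ _ => rfl)]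
            exact hub e he
          · have he1 : e + 1 < α := hsucc e he
            rcases (hE (e + 1)).2 with h2 | h2
            · have hee1 : (e + 1).IsEvenStage := by rw [h2]; exact (hE (e + 1)).1
              have hlt1 : e < e + 1 := by
                rw [Ordinal.add_one_eq_succ]; exact Order.lt_succ_of_not_isMax (not_isMax _)
              have step : N.iterLE
                  (auxA N R r₀ e (fun b hb => f b (hb.trans he)))
                  (auxA N R r₀ (e + 1) (fun b hb => f b (hb.trans he1))) :=
                (good (e + 1) he1 hee1).2.1 e hlt1 hee
              have tail : N.iterLE
                  (auxA N R r₀ (e + 1) (fun b hb => f b (hb.trans he1))) r := by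
                rw [auxA_congr N R r₀ h2 (fun b hb => f b (hb.trans he1))
                  (fun b hb => f b (hb.trans (hElt (e + 1) he1))) (fun _ _ _ => rfl)]
                exact hub (e + 1) he1
              exact iterLE_trans N step tail
            · have heq' : e = E (e + 1) := by
                rw [Ordinal.add_one_eq_succ, Ordinal.add_one_eq_succ] at h2
                exact Order.succ_injective h2
              rw [auxA_congr N R r₀ heq' (fun b hb => f b (hb.trans he))
                (fun b hb => f b (hb.trans (hElt (e + 1) he1))) (fun _ _ _ => rfl)]
              exact hub (e + 1) he1
        refine ⟨r, hrR, fun β hβ hβe => claimI β hβ hβe, ?_⟩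
        intro β hβ
        have hβ1 : β + 1 < α := hsucc β hβ
        have hβE : β ≤ E (β + 1) := by
          rcases (hE (β + 1)).2 with h | h
          · have hlt : β < β + 1 := by
              rw [Ordinal.add_one_eq_succ]; exact Order.lt_succ_of_not_isMax (not_isMax _)
            exact (hlt.trans_eq h).le
          · rw [Ordinal.add_one_eq_succ, Ordinal.add_one_eq_succ] at h
            exact (Order.succ_injective h).le
        have h2eq : E (β + 1) + 2 = (E (β + 1) + 1) + 1 := by
          rw [add_assoc, one_add_one_eq_two]
        have he'lt : E (β + 1) + 2 < α := by
          have hEα : E (β + 1) < α := (hEle (β + 1)).trans_lt hβ1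
          rw [h2eq]; exact hsucc _ (hsucc _ hEα)
        have he'e : (E (β + 1) + 2).IsEvenStage := evenStage_add_two (hE (β + 1)).1
        have hβlt : β < E (β + 1) + 2 := by
          refine lt_of_le_of_lt hβE ?_
          rw [h2eq, Ordinal.add_one_eq_succ, Ordinal.add_one_eq_succ]
          exact (Order.lt_succ_of_not_isMax (not_isMax _)).trans
            (Order.lt_succ_of_not_isMax (not_isMax _))
        have hgood := good (E (β + 1) + 2) he'lt he'e
        have hfle : f β hβ ≤
            (auxA N R r₀ (E (β + 1) + 2) (fun b hb => f b (hb.trans he'lt))).1 :=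
          hgood.2.2 β hβlt
        exact hfle.trans (claimI _ he'lt he'e).1
      · -- successor case: α = γ + 2
        subst hαeq
        have h2eq : (γ : Ordinal) + 2 = (γ + 1) + 1 := by rw [add_assoc, one_add_one_eq_two]
        have hγlt1 : γ < γ + 1 := by
          rw [Ordinal.add_one_eq_succ]; exact Order.lt_succ_of_not_isMax (not_isMax _)
        have hsucclt : γ + 1 < γ + 2 := by
          rw [h2eq, Ordinal.add_one_eq_succ (γ + 1)]
          exact Order.lt_succ_of_not_isMax (not_isMax _)
        have hγα : γ < γ + 2 := hγlt1.trans hsucclt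
        obtain ⟨hgR, hgchain, hgle⟩ := IH γ hγα (hγα.trans hα) _ (hres γ hγα) hγe
        have hfγ : f γ hγα =
            (auxA N R r₀ γ (fun b hb => f b (hb.trans hγα))).1 := hf.2 γ hγα hγe
        obtain ⟨r, hrR, hxr⟩ := hdense
          (f (γ + 1) hsucclt, (auxA N R r₀ γ (fun b hb => f b (hb.trans hγα))).2)
        have hAx : N.iterLE (auxA N R r₀ γ (fun b hb => f b (hb.trans hγα)))
            (f (γ + 1) hsucclt, (auxA N R r₀ γ (fun b hb => f b (hb.trans hγα))).2) :=
          ⟨by rw [← hfγ]; exact hf.1 (γ + 1) γ hsucclt hγlt1, N.fle_refl _ _⟩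
        refine ⟨r, hrR, ?_, ?_⟩
        · intro β hβ hβe
          have hβle : β ≤ γ + 1 := by
            rw [h2eq, Ordinal.add_one_eq_succ] at hβ
            exact Order.lt_succ_iff.mp hβ
          rcases lt_or_eq_of_le hβle with hβlt | rfl
          · have hβγ : β ≤ γ := by
              rw [Ordinal.add_one_eq_succ] at hβlt
              exact Order.lt_succ_iff.mp hβlt
            rcases lt_or_eq_of_le hβγ with h | rfl
            · exact iterLE_trans N (hgchain β h hβe) (iterLE_trans N hAx hxr)
            · exact iterLE_trans N hAx hxr
          · exact absurd hβe (not_evenStage_succ hγe)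
        · intro β hβ
          have hβle : β ≤ γ + 1 := by
            rw [h2eq, Ordinal.add_one_eq_succ] at hβ
            exact Order.lt_succ_iff.mp hβ
          rcases lt_or_eq_of_le hβle with hβlt | rfl
          · exact le_trans (hf.1 (γ + 1) β hsucclt hβlt) hxr.1
          · exact hxr.1
  intro α hα f hf hαe β hβ
  have hαlam : α < lam.ord := by
    have h1 : α ≤ δ.ord := by
      rw [Ordinal.add_one_eq_succ] at hα
      exact Order.lt_succ_iff.mp hα
    exact h1.trans_lt (Cardinal.ord_lt_ord.mpr hδ)
  exact (main α hαlam f hf hαe).2.2 β hβ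
end

section
/- Let λ be a regular uncountable cardinal and S ⊆ λ⁺ a set of ordinals such that every initial segment of S is non-stationary in its supremum (in particular S is non-stationary in its supremum), and suppose each element of a sequence ⟨x_β : β ∈ S⟩ satisfies: x_β ⊆ β is cofinal in β of order type δ for a fixed regular δ. Then there is a sequence ⟨y_β : β ∈ S⟩ such that for every β ∈ S, y_β ⊆ x_β, x_β − y_β is bounded in β, and for β₁ ≠ β₂ in S, y_{β₁} ∩ y_{β₂} = ∅. -/
open Cardinal

/-- `C` is club (closed and unbounded) in the ordinal `α`. -/
def IsClubIn (C : Set Ordinal) (α : Ordinal) : Prop :=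
  (∀ β < α, ∃ γ ∈ C, β < γ ∧ γ < α) ∧
  (∀ β < α, 0 < β → (∀ γ < β, ∃ ξ ∈ C, γ < ξ ∧ ξ < β) → β ∈ C)

/-- `S` is stationary in the ordinal `α`: it meets every club subset of `α`. -/
def StationaryIn (S : Set Ordinal) (α : Ordinal) : Prop :=
  ∀ C : Set Ordinal, IsClubIn C α → (S ∩ C).Nonempty

section Aux

universe u v

/-- Every member of the support of a cofinal type-`δ` system is a positive limit. -/
lemma mem_limit_aux {δc : Cardinal} (hδ : δc.IsRegular) {x : Ordinal → Set Ordinal} {β : Ordinal}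
    (hxβ : x β ⊆ Set.Iio β ∧ (∀ γ < β, ∃ ξ ∈ x β, γ ≤ ξ) ∧
      Nonempty (↥(Set.Iio δc.ord) ≃o ↥(x β))) :
    0 < β ∧ ∀ γ < β, γ + 1 < β := by
  obtain ⟨e⟩ := hxβ.2.2
  have hδlim := Cardinal.isSuccLimit_ord hδ.aleph0_le
  have h0 : 0 < β := by
    have := hxβ.1 (e ⟨0, hδlim.pos⟩).2
    exact lt_of_le_of_lt zero_le this
  refine ⟨h0, fun γ hγ => ?_⟩
  obtain ⟨ξ, hξx, hγξ⟩ := hxβ.2.1 γ hγ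
  set i := e.symm ⟨ξ, hξx⟩ with hidef
  have hi1 : (↑i : Ordinal) + 1 < δc.ord := by
    rw [Ordinal.add_one_eq_succ]; exact hδlim.succ_lt i.2
  have h2 : i < (⟨↑i + 1, hi1⟩ : ↥(Set.Iio δc.ord)) := by
    have : (↑i : Ordinal) < ↑i + 1 := by
      rw [Ordinal.add_one_eq_succ]; exact Order.lt_succ _
    exact Subtype.coe_lt_coe.mp this
  have hlt : ξ < ↑(e ⟨↑i + 1, hi1⟩) := by
    have h1 : (⟨ξ, hξx⟩ : ↥(x β)) = e i := (e.apply_symm_apply _).symm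
    have := e.lt_iff_lt.2 h2
    rw [← h1] at this
    exact Subtype.coe_lt_coe.2 this
  have hβ' : (↑(e ⟨↑i + 1, hi1⟩) : Ordinal) < β := hxβ.1 (e ⟨↑i + 1, hi1⟩).2
  have : γ + 1 ≤ ↑(e ⟨↑i + 1, hi1⟩) := by
    rw [Ordinal.add_one_eq_succ, Order.succ_le_iff]
    exact lt_of_le_of_lt hγξ hlt
  exact lt_of_le_of_lt this hβ'

/-- Key boundedness: the trace of `x β` on an earlier member `β'` of `S` is bounded in `β'`. -/
lemma key_bound_aux {δc : Cardinal.{u}} (hδ : δc.IsRegular) {x : Ordinal.{v} → Set Ordinal.{v}}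
    {β β' : Ordinal.{v}}
    (hxβ : x β ⊆ Set.Iio β ∧ (∀ γ < β, ∃ ξ ∈ x β, γ ≤ ξ) ∧
      Nonempty (↥(Set.Iio δc.ord) ≃o ↥(x β)))
    (hxβ' : x β' ⊆ Set.Iio β' ∧ (∀ γ < β', ∃ ξ ∈ x β', γ ≤ ξ) ∧
      Nonempty (↥(Set.Iio δc.ord) ≃o ↥(x β')))
    (hββ' : β' < β) (hlim' : ∀ γ < β', γ + 1 < β') :
    ∃ b < β', ∀ ξ ∈ x β, ξ < β' → ξ < b := by
  by_contra hcon
  push_neg at hcon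
  obtain ⟨e⟩ := hxβ.2.2
  obtain ⟨e'⟩ := hxβ'.2.2
  have hδlim := Cardinal.isSuccLimit_ord hδ.aleph0_le
  obtain ⟨ξ₀, hξ₀x, hξ₀⟩ := hxβ.2.1 β' hββ'
  set j : Ordinal := ↑(e.symm ⟨ξ₀, hξ₀x⟩) with hjdef
  have hj : j < δc.ord := (e.symm ⟨ξ₀, hξ₀x⟩).2
  -- total auxiliary index map
  set g1 : Ordinal → Ordinal := fun i =>
    sInf {c : Ordinal | ∃ hc : c < δc.ord, ∃ hi : i < δc.ord,
      (↑(e ⟨i, hi⟩) : Ordinal) ≤ ↑(e' ⟨c, hc⟩)} with hg1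
  have hg1lt : ∀ i : Ordinal, g1 i < δc.ord := by
    intro i
    by_cases hne : {c : Ordinal | ∃ hc : c < δc.ord, ∃ hi : i < δc.ord,
        (↑(e ⟨i, hi⟩) : Ordinal) ≤ ↑(e' ⟨c, hc⟩)}.Nonempty
    · obtain ⟨hc, -⟩ := csInf_mem hne
      exact hc
    · rw [Set.not_nonempty_iff_eq_empty] at hne
      simp only [hg1]
      rw [hne, Ordinal.sInf_empty]
      exact hδlim.pos
  set g : Shrink.{u} ↥(Set.Iio j) → Ordinal := fun i =>
    g1 ↑((equivShrink.{u} ↥(Set.Iio j)).symm i) with hg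
  have hcofinal : ∀ c < δc.ord, ∃ i, c < g i := by
    intro c hc
    have hζ : (↑(e' ⟨c, hc⟩) : Ordinal) < β' := hxβ'.1 (e' ⟨c, hc⟩).2
    obtain ⟨ξ, hξx, hξβ', hζξ⟩ := hcon _ (hlim' _ hζ)
    have hζξ' : (↑(e' ⟨c, hc⟩) : Ordinal) < ξ := by
      refine lt_of_lt_of_le ?_ hζξ
      rw [Ordinal.add_one_eq_succ]; exact Order.lt_succ _
    set i0 : Ordinal := ↑(e.symm ⟨ξ, hξx⟩) with hi0def
    have hi0δ : i0 < δc.ord := (e.symm ⟨ξ, hξx⟩).2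
    have hi0j : i0 < j := by
      have h2 : e.symm ⟨ξ, hξx⟩ < e.symm ⟨ξ₀, hξ₀x⟩ := by
        rw [e.symm.lt_iff_lt]
        exact Subtype.mk_lt_mk.2 (lt_of_lt_of_le hξβ' hξ₀)
      exact Subtype.coe_lt_coe.2 h2
    -- value of e at i0
    have hecoe : ∀ hi : i0 < δc.ord, (↑(e ⟨i0, hi⟩) : Ordinal) = ξ := by
      intro hi
      rw [show (⟨i0, hi⟩ : ↥(Set.Iio δc.ord)) = e.symm ⟨ξ, hξx⟩ from Subtype.ext rfl,
        e.apply_symm_apply]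
    -- the defining set at i0 is nonempty
    obtain ⟨η, hηx, hξη⟩ := hxβ'.2.1 ξ hξβ'
    have hAne : {c' : Ordinal | ∃ hc' : c' < δc.ord, ∃ hi : i0 < δc.ord,
        (↑(e ⟨i0, hi⟩) : Ordinal) ≤ ↑(e' ⟨c', hc'⟩)}.Nonempty := by
      refine ⟨↑(e'.symm ⟨η, hηx⟩), (e'.symm ⟨η, hηx⟩).2, hi0δ, ?_⟩
      rw [hecoe]
      rw [show (⟨↑(e'.symm ⟨η, hηx⟩), (e'.symm ⟨η, hηx⟩).2⟩ : ↥(Set.Iio δc.ord))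
        = e'.symm ⟨η, hηx⟩ from Subtype.ext rfl, e'.apply_symm_apply]
      exact hξη
    obtain ⟨hcI, hiI, hleI⟩ := csInf_mem hAne
    rw [hecoe] at hleI
    refine ⟨equivShrink.{u} ↥(Set.Iio j) ⟨i0, hi0j⟩, ?_⟩
    have hgeq : g (equivShrink.{u} ↥(Set.Iio j) ⟨i0, hi0j⟩) = g1 i0 := by
      simp [hg]
    rw [hgeq]
    -- c < g1 i0 since e' at g1 i0 dominates ξ > e' at c
    have : e' ⟨c, hc⟩ < e' ⟨g1 i0, hcI⟩ := by
      rw [← Subtype.coe_lt_coe]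
      exact lt_of_lt_of_le hζξ' hleI
    have := e'.lt_iff_lt.1 this
    exact Subtype.mk_lt_mk.1 this
  have hglt : ∀ i, g i < δc.ord := fun i => hg1lt _
  have hlsub : Ordinal.lsub.{u,u} g = δc.ord := by
    apply le_antisymm
    · exact Ordinal.lsub_le hglt
    · by_contra h
      push_neg at h
      obtain ⟨i, hi⟩ := hcofinal _ h
      exact lt_irrefl _ (hi.trans (Ordinal.lt_lsub g i))
  have h1 : δc ≤ #(Shrink.{u} ↥(Set.Iio j)) := by
    have := Ordinal.cof_lsub_le.{u} g
    rw [hlsub, hδ.cof_eq] at this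
    exact this
  have h2 : #(Shrink.{u} ↥(Set.Iio j)) = j.card := by
    have h3 := Cardinal.lift_mk_shrink''.{u+1, u} (↥(Set.Iio j))
    rw [Ordinal.mk_Iio_ordinal] at h3
    exact Cardinal.lift_inj.1 h3
  rw [h2] at h1
  exact lt_irrefl _ (h1.trans_lt (Cardinal.lt_ord.1 hj))

/-- From non-stationarity of initial segments, extract a club in `s` inside `(lo, s)`
avoiding `S`. -/
lemma exists_sep_club (S : Set Ordinal)
    (hnonstat : ∀ γ : Ordinal, ¬ StationaryIn (S ∩ Set.Iio γ) (sSup (S ∩ Set.Iio γ)))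
    {s lo : Ordinal} (hlo : lo < s) (hslim : ∀ γ < s, γ + 1 < s) :
    ∃ C : Set Ordinal, IsClubIn C s ∧ C ⊆ Set.Ioo lo s ∧ ∀ ξ ∈ C, ξ ∉ S := by
  have hbdd : BddAbove (S ∩ Set.Iio s) := ⟨s, fun a ha => le_of_lt ha.2⟩
  have hule : sSup (S ∩ Set.Iio s) ≤ s := csSup_le' (fun a ha => le_of_lt ha.2)
  rcases lt_or_eq_of_le hule with hu | hu
  · -- bounded initial segment: use an interval
    set m := max lo (sSup (S ∩ Set.Iio s)) with hm
    have hms : m < s := max_lt hlo hu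
    refine ⟨Set.Ioo m s, ⟨?_, ?_⟩, ?_, ?_⟩
    · intro β hβ
      refine ⟨max β m + 1, ⟨?_, hslim _ (max_lt hβ hms)⟩, ?_, hslim _ (max_lt hβ hms)⟩
      · exact lt_of_le_of_lt (le_max_right β m) (by
          rw [Ordinal.add_one_eq_succ]; exact Order.lt_succ _)
      · exact lt_of_le_of_lt (le_max_left β m) (by
          rw [Ordinal.add_one_eq_succ]; exact Order.lt_succ _)
    · intro β hβs hβ0 hcl
      rcases lt_or_ge m β with h | h
      · exact ⟨h, hβs⟩
      · obtain ⟨ξ, hξC, -, hξβ⟩ := hcl 0 hβ0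
        exact absurd (lt_trans (lt_of_lt_of_le hξβ h) hξC.1) (lt_irrefl ξ)
    · exact fun ξ hξ => ⟨lt_of_le_of_lt (le_max_left lo _) hξ.1, hξ.2⟩
    · intro ξ hξ hξS
      have : ξ ≤ sSup (S ∩ Set.Iio s) := le_csSup hbdd ⟨hξS, hξ.2⟩
      exact absurd (lt_of_le_of_lt (le_max_right lo _) hξ.1) (not_lt_of_ge this)
  · -- cofinal initial segment: use the non-stationarity witness
    have := hnonstat s
    rw [hu] at this
    unfold StationaryIn at this
    push_neg at this
    obtain ⟨C₀, hC₀, hne⟩ := this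
    refine ⟨C₀ ∩ Set.Ioo lo s, ⟨?_, ?_⟩, fun ξ hξ => hξ.2, ?_⟩
    · intro β hβ
      obtain ⟨γ, hγC, hγgt, hγs⟩ := hC₀.1 (max β lo) (max_lt hβ hlo)
      exact ⟨γ, ⟨hγC, lt_of_le_of_lt (le_max_right β lo) hγgt, hγs⟩,
        lt_of_le_of_lt (le_max_left β lo) hγgt, hγs⟩
    · intro β hβs hβ0 hcl
      rcases lt_or_ge lo β with h | h
      · refine ⟨hC₀.2 β hβs hβ0 (fun γ hγ => ?_), h, hβs⟩
        obtain ⟨ξ, hξ, h1, h2⟩ := hcl γ hγ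
        exact ⟨ξ, hξ.1, h1, h2⟩
      · obtain ⟨ξ, hξC, -, hξβ⟩ := hcl 0 hβ0
        exact absurd hξβ (not_lt_of_ge (le_trans h (le_of_lt hξC.2.1)))
    · intro ξ hξ hξS
      have : ξ ∈ (S ∩ Set.Iio s) ∩ C₀ := ⟨⟨hξS, hξ.2.2⟩, hξ.1⟩
      rw [hne] at this
      exact this

/-- Main recursive construction, by induction on an upper bound `hi` for the piece
`S ∩ (lo, hi]` being processed.  `E` is a protected set that the chosen `y`'s must avoid. -/
lemma main_aux (S : Set Ordinal) (x : Ordinal → Set Ordinal)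
    (hxsub : ∀ β ∈ S, x β ⊆ Set.Iio β)
    (hlim : ∀ β ∈ S, 0 < β ∧ ∀ γ < β, γ + 1 < β)
    (hkey : ∀ β ∈ S, ∀ β' ∈ S, β' < β → ∃ b < β', ∀ ξ ∈ x β, ξ < β' → ξ < b)
    (hnonstat : ∀ γ : Ordinal, ¬ StationaryIn (S ∩ Set.Iio γ) (sSup (S ∩ Set.Iio γ))) :
    ∀ hi lo : Ordinal, ∀ E : Set Ordinal,
      (∀ β ∈ S, lo < β → β ≤ hi → ∃ b < β, ∀ ξ ∈ E, ξ < β → ξ < b) →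
      ∃ y : Ordinal → Set Ordinal,
        (∀ β ∈ S, lo < β → β ≤ hi →
          y β ⊆ x β ∧ (∀ ξ ∈ y β, lo < ξ) ∧ (∀ ξ ∈ y β, ξ ∉ E) ∧
          ∃ b < β, ∀ ξ ∈ x β \ y β, ξ < b) ∧
        (∀ β₁ ∈ S, lo < β₁ → β₁ ≤ hi → ∀ β₂ ∈ S, lo < β₂ → β₂ ≤ hi → β₁ ≠ β₂ →
          Disjoint (y β₁) (y β₂)) := by
  intro hi
  induction hi using Ordinal.induction with
  | _ hi IH =>
  intro lo E hE
  by_cases hP : ∃ β, β ∈ S ∧ lo < β ∧ β ≤ hi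
  case neg =>
    refine ⟨fun _ => ∅, ?_, ?_⟩
    · intro β hβ h1 h2; exact absurd ⟨β, hβ, h1, h2⟩ hP
    · intro β₁ hβ₁ h1 h2 _ _ _ _ _; exact absurd ⟨β₁, hβ₁, h1, h2⟩ hP
  case pos =>
  obtain ⟨β₀, hβ₀S, hβ₀lo, hβ₀hi⟩ := hP
  have hQne : (S ∩ Set.Ioc lo hi).Nonempty := ⟨β₀, hβ₀S, hβ₀lo, hβ₀hi⟩
  set s := sSup (S ∩ Set.Ioc lo hi) with hsdef
  have hmem_le : ∀ β ∈ S, lo < β → β ≤ hi → β ≤ s := fun β hβ h1 h2 =>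
    le_csSup ⟨hi, fun b hb => hb.2.2⟩ ⟨hβ, h1, h2⟩
  have hs_le_hi : s ≤ hi := csSup_le hQne (fun b hb => hb.2.2)
  have hlos : lo < s := lt_of_lt_of_le hβ₀lo (hmem_le β₀ hβ₀S hβ₀lo hβ₀hi)
  have hslim : ∀ γ < s, γ + 1 < s := by
    by_cases hsS : s ∈ S
    · exact (hlim s hsS).2
    · intro γ hγ
      obtain ⟨β, hβQ, hγβ⟩ := exists_lt_of_lt_csSup hQne hγ
      have hβs : β < s := lt_of_le_of_ne (le_csSup ⟨hi, fun b hb => hb.2.2⟩ hβQ)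
        (fun h => hsS (h ▸ hβQ.1))
      have : γ + 1 ≤ β := by rw [Ordinal.add_one_eq_succ, Order.succ_le_iff]; exact hγβ
      exact lt_of_le_of_lt this hβs
  obtain ⟨C, hCclub, hCsub, hCS⟩ := exists_sep_club S hnonstat hlos hslim
  set cb : Ordinal → Ordinal := fun β => max lo (sSup (C ∩ Set.Iio β)) with hcbdef
  set nb : Ordinal → Ordinal := fun β => sInf (C ∩ Set.Ioi β) with hnbdef
  have hCbdd : ∀ β : Ordinal, BddAbove (C ∩ Set.Iio β) :=
    fun β => ⟨β, fun ξ hξ => le_of_lt hξ.2⟩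
  have hnb_spec : ∀ β ∈ S, β < s → nb β ∈ C ∧ β < nb β ∧ nb β < s := by
    intro β hβ hβs
    obtain ⟨γ, hγC, hβγ, hγs⟩ := hCclub.1 β hβs
    have hne : (C ∩ Set.Ioi β).Nonempty := ⟨γ, hγC, hβγ⟩
    have hmem := csInf_mem hne
    exact ⟨hmem.1, hmem.2, lt_of_le_of_lt (csInf_le (OrderBot.bddBelow _) ⟨hγC, hβγ⟩) hγs⟩
  have hcb_spec : ∀ β ∈ S, lo < β → β < s → cb β < β := by
    intro β hβ hlo' hβs
    have hβ0 : 0 < β := (hlim β hβ).1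
    have hle : sSup (C ∩ Set.Iio β) ≤ β := csSup_le' (fun ξ hξ => le_of_lt hξ.2)
    rcases lt_or_eq_of_le hle with h2 | h2
    · exact max_lt hlo' h2
    · exfalso
      have hne : (C ∩ Set.Iio β).Nonempty := by
        by_contra hne
        rw [Set.not_nonempty_iff_eq_empty] at hne
        rw [hne, csSup_empty] at h2
        have h0 : (0 : Ordinal) = β := by simpa using h2
        exact absurd h0.symm (ne_of_gt hβ0)
      have hβC : β ∈ C := by
        refine hCclub.2 β hβs hβ0 (fun γ hγ => ?_)
        obtain ⟨ξ, hξmem, hγξ⟩ := exists_lt_of_lt_csSup hne (h2 ▸ hγ)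
        exact ⟨ξ, hξmem.1, hγξ, hξmem.2⟩
      exact hCS β hβC hβ
  set E' : Set Ordinal := E ∪ {ξ | s ∈ S ∧ ξ ∈ x s} with hE'def
  have hYex : ∀ c n : Ordinal, ∃ y' : Ordinal → Set Ordinal,
      (n < hi ∧ (∀ β' ∈ S, c < β' → β' ≤ n → ∃ b < β', ∀ ξ ∈ E', ξ < β' → ξ < b)) →
      ((∀ β' ∈ S, c < β' → β' ≤ n →
          y' β' ⊆ x β' ∧ (∀ ξ ∈ y' β', c < ξ) ∧ (∀ ξ ∈ y' β', ξ ∉ E') ∧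
          ∃ b < β', ∀ ξ ∈ x β' \ y' β', ξ < b) ∧
       (∀ β₁ ∈ S, c < β₁ → β₁ ≤ n → ∀ β₂ ∈ S, c < β₂ → β₂ ≤ n → β₁ ≠ β₂ →
          Disjoint (y' β₁) (y' β₂))) := by
    intro c n
    by_cases h : n < hi ∧ (∀ β' ∈ S, c < β' → β' ≤ n → ∃ b < β', ∀ ξ ∈ E', ξ < β' → ξ < b)
    · obtain ⟨y', hy'⟩ := IH n h.1 c E' h.2
      exact ⟨y', fun _ => hy'⟩
    · exact ⟨fun _ => ∅, fun hh => absurd hh h⟩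
  choose Y hY using hYex
  set y : Ordinal → Set Ordinal :=
    fun β => if β = s then x s \ {ξ | ξ ≤ lo ∨ ξ ∈ E} else Y (cb β) (nb β) β with hydef
  have hyeq1 : ∀ β, β = s → y β = x s \ {ξ | ξ ≤ lo ∨ ξ ∈ E} := by
    intro β hβ; rw [hydef]; simp [hβ]
  have hyeq2 : ∀ β, β ≠ s → y β = Y (cb β) (nb β) β := by
    intro β hβ; rw [hydef]; simp [hβ]
  have hgap : ∀ β, β ∈ S → lo < β → β < s →
      ((∀ β' ∈ S, cb β < β' → β' ≤ nb β →
          Y (cb β) (nb β) β' ⊆ x β' ∧ (∀ ξ ∈ Y (cb β) (nb β) β', cb β < ξ) ∧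
          (∀ ξ ∈ Y (cb β) (nb β) β', ξ ∉ E') ∧
          ∃ b < β', ∀ ξ ∈ x β' \ Y (cb β) (nb β) β', ξ < b) ∧
       (∀ β₁ ∈ S, cb β < β₁ → β₁ ≤ nb β → ∀ β₂ ∈ S, cb β < β₂ → β₂ ≤ nb β → β₁ ≠ β₂ →
          Disjoint (Y (cb β) (nb β) β₁) (Y (cb β) (nb β) β₂))) := by
    intro β hβ hloβ hβs
    refine hY (cb β) (nb β) ⟨lt_of_lt_of_le (hnb_spec β hβ hβs).2.2 hs_le_hi, ?_⟩
    intro β' hβ' hcβ' hβ'n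
    have hloβ' : lo < β' := lt_of_le_of_lt (le_max_left lo _) hcβ'
    have hβ's : β' < s := lt_of_le_of_lt hβ'n (hnb_spec β hβ hβs).2.2
    obtain ⟨b1, hb1, hb1P⟩ := hE β' hβ' hloβ' (le_of_lt (lt_of_lt_of_le hβ's hs_le_hi))
    by_cases hsS : s ∈ S
    · obtain ⟨b2, hb2, hb2P⟩ := hkey s hsS β' hβ' hβ's
      refine ⟨max b1 b2, max_lt hb1 hb2, ?_⟩
      rintro ξ (hξE | ⟨-, hξx⟩) hξβ'
      · exact lt_of_lt_of_le (hb1P ξ hξE hξβ') (le_max_left _ _)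
      · exact lt_of_lt_of_le (hb2P ξ hξx hξβ') (le_max_right _ _)
    · refine ⟨b1, hb1, ?_⟩
      rintro ξ (hξE | ⟨hsS', -⟩) hξβ'
      · exact hb1P ξ hξE hξβ'
      · exact absurd hsS' hsS
  refine ⟨y, ?_, ?_⟩
  · -- pointwise properties
    intro β hβ hloβ hβhi
    rcases eq_or_lt_of_le (hmem_le β hβ hloβ hβhi) with heq | hlt
    · rw [hyeq1 β heq]
      subst heq
      refine ⟨Set.diff_subset, ?_, ?_, ?_⟩
      · intro ξ hξ
        have h2 := hξ.2
        simp only [Set.mem_setOf_eq, not_or, not_le] at h2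
        exact h2.1
      · intro ξ hξ
        have h2 := hξ.2
        simp only [Set.mem_setOf_eq, not_or, not_le] at h2
        exact h2.2
      · obtain ⟨bE, hbE, hbEP⟩ := hE s hβ hlos hs_le_hi
        refine ⟨max (lo + 1) bE, max_lt (hslim lo hlos) hbE, ?_⟩
        rintro ξ ⟨hξx, hξy⟩
        have hbad : ξ ≤ lo ∨ ξ ∈ E := by
          by_contra hcon2
          exact hξy ⟨hξx, hcon2⟩
        rcases hbad with h | h
        · refine lt_of_le_of_lt h (lt_of_lt_of_le ?_ (le_max_left _ _))
          rw [Ordinal.add_one_eq_succ]; exact Order.lt_succ lo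
        · exact lt_of_lt_of_le (hbEP ξ h (hxsub s hβ hξx)) (le_max_right _ _)
    · have hne : β ≠ s := ne_of_lt hlt
      rw [hyeq2 β hne]
      have hprops := (hgap β hβ hloβ hlt).1 β hβ (hcb_spec β hβ hloβ hlt)
        (le_of_lt (hnb_spec β hβ hlt).2.1)
      refine ⟨hprops.1, ?_, ?_, hprops.2.2.2⟩
      · intro ξ hξ
        exact lt_of_le_of_lt (le_max_left lo _) (hprops.2.1 ξ hξ)
      · intro ξ hξ hξE
        exact hprops.2.2.1 ξ hξ (Or.inl hξE)
  · -- disjointness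
    have hcore : ∀ β₁, β₁ ∈ S → lo < β₁ → β₁ ≤ hi → ∀ β₂, β₂ ∈ S → lo < β₂ → β₂ ≤ hi →
        β₁ < β₂ → Disjoint (y β₁) (y β₂) := by
      intro β₁ hβ₁ hlo₁ hhi₁ β₂ hβ₂ hlo₂ hhi₂ hlt12
      have hβ₂s : β₂ ≤ s := hmem_le β₂ hβ₂ hlo₂ hhi₂
      have hβ₁s : β₁ < s := lt_of_lt_of_le hlt12 hβ₂s
      have hne₁ : β₁ ≠ s := ne_of_lt hβ₁s
      rw [hyeq2 β₁ hne₁]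
      have hgap₁ := hgap β₁ hβ₁ hlo₁ hβ₁s
      have hdom₁ : cb β₁ < β₁ := hcb_spec β₁ hβ₁ hlo₁ hβ₁s
      have hdom₁' : β₁ ≤ nb β₁ := le_of_lt (hnb_spec β₁ hβ₁ hβ₁s).2.1
      rcases eq_or_lt_of_le hβ₂s with heq | hlt₂s
      · rw [hyeq1 β₂ heq]
        rw [Set.disjoint_left]
        intro ξ hξ1 hξ2
        exact (hgap₁.1 β₁ hβ₁ hdom₁ hdom₁').2.2.1 ξ hξ1 (Or.inr ⟨heq ▸ hβ₂, hξ2.1⟩)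
      · have hne₂ : β₂ ≠ s := ne_of_lt hlt₂s
        rw [hyeq2 β₂ hne₂]
        by_cases hnn : nb β₁ = nb β₂
        · have hCeq : C ∩ Set.Iio β₁ = C ∩ Set.Iio β₂ := by
            apply Set.Subset.antisymm
            · exact Set.inter_subset_inter_right C (fun ξ hξ => lt_trans hξ hlt12)
            · rintro ξ ⟨hξC, hξβ₂⟩
              refine ⟨hξC, ?_⟩
              by_contra hge
              rw [Set.mem_Iio, not_lt] at hge
              have hβ₁ξ : β₁ < ξ := lt_of_le_of_ne hge (fun h => hCS ξ hξC (h ▸ hβ₁))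
              have h1 : nb β₁ ≤ ξ := csInf_le (OrderBot.bddBelow _) ⟨hξC, hβ₁ξ⟩
              have h2 : ξ < nb β₂ := lt_trans hξβ₂ (hnb_spec β₂ hβ₂ hlt₂s).2.1
              rw [← hnn] at h2
              exact absurd (lt_of_le_of_lt h1 h2) (lt_irrefl _)
          have hcc : cb β₁ = cb β₂ := by
            simp only [hcbdef]
            rw [hCeq]
          have hd := hgap₁.2 β₁ hβ₁ hdom₁ hdom₁' β₂ hβ₂
            (by rw [hcc]; exact hcb_spec β₂ hβ₂ hlo₂ hlt₂s)
            (by rw [hnn]; exact le_of_lt (hnb_spec β₂ hβ₂ hlt₂s).2.1)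
            (ne_of_lt hlt12)
          rw [← hcc, ← hnn]
          exact hd
        · have hnbC := hnb_spec β₁ hβ₁ hβ₁s
          have h1 : nb β₁ ≤ β₂ := by
            by_contra hgt
            push_neg at hgt
            have ha : nb β₂ ≤ nb β₁ := csInf_le (OrderBot.bddBelow _) ⟨hnbC.1, hgt⟩
            have hb : nb β₁ ≤ nb β₂ := by
              obtain ⟨γ, hγC, hγgt, hγlt⟩ := hCclub.1 β₂ hlt₂s
              exact csInf_le_csInf (OrderBot.bddBelow _) ⟨γ, hγC, hγgt⟩
                (fun ξ hξ => ⟨hξ.1, lt_trans hlt12 hξ.2⟩)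
            exact hnn (le_antisymm hb ha)
          have h2 : nb β₁ < β₂ := lt_of_le_of_ne h1 (fun h => hCS (nb β₁) hnbC.1 (h ▸ hβ₂))
          have h3 : β₁ < cb β₂ := lt_of_lt_of_le hnbC.2.1
            (le_trans (le_csSup (hCbdd β₂) ⟨hnbC.1, h2⟩) (le_max_right lo _))
          rw [Set.disjoint_left]
          intro ξ hξ1 hξ2
          have hlt' : cb β₂ < ξ := ((hgap β₂ hβ₂ hlo₂ hlt₂s).1 β₂ hβ₂
            (hcb_spec β₂ hβ₂ hlo₂ hlt₂s) (le_of_lt (hnb_spec β₂ hβ₂ hlt₂s).2.1)).2.1 ξ hξ2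
          have hltβ₁ : ξ < β₁ := hxsub β₁ hβ₁ ((hgap₁.1 β₁ hβ₁ hdom₁ hdom₁').1 hξ1)
          exact absurd (lt_trans hltβ₁ (lt_trans h3 hlt')) (lt_irrefl ξ)
    intro β₁ hβ₁ hlo₁ hhi₁ β₂ hβ₂ hlo₂ hhi₂ hne
    rcases hne.lt_or_gt with h | h
    · exact hcore β₁ hβ₁ hlo₁ hhi₁ β₂ hβ₂ hlo₂ hhi₂ h
    · exact (hcore β₂ hβ₂ hlo₂ hhi₂ β₁ hβ₁ hlo₁ hhi₁ h).symm

end Aux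

/-- Let `λ` be a regular uncountable cardinal and `S ⊆ λ⁺` a set of ordinals
such that every initial segment of `S` (in particular `S` itself) is
non-stationary in its supremum, and let `⟨x_β : β ∈ S⟩` be such that each
`x_β ⊆ β` is cofinal in `β` of order type `δ`, for a fixed regular `δ < λ`.
Then there is a sequence `⟨y_β : β ∈ S⟩` with `y_β ⊆ x_β`, `x_β − y_β`
bounded in `β`, and the `y_β` pairwise disjoint. -/
theorem disjointify_clubsuit_sequence (δc lam : Cardinal)
    (hδ : δc.IsRegular) (hlam : lam.IsRegular) (hlam_unc : ℵ₀ < lam)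
    (hdlt : δc < lam)
    (S : Set Ordinal) (hS : S ⊆ Set.Iio (Order.succ lam).ord)
    (hnonstat : ∀ γ : Ordinal, ¬ StationaryIn (S ∩ Set.Iio γ) (sSup (S ∩ Set.Iio γ)))
    (hnonstat' : ¬ StationaryIn S (sSup S))
    (x : Ordinal → Set Ordinal)
    (hx : ∀ β ∈ S, x β ⊆ Set.Iio β ∧ (∀ γ < β, ∃ ξ ∈ x β, γ ≤ ξ) ∧
      Nonempty (↥(Set.Iio δc.ord) ≃o ↥(x β))) :
    ∃ y : Ordinal → Set Ordinal,
      (∀ β ∈ S, y β ⊆ x β ∧ ∃ b < β, ∀ ξ ∈ x β \ y β, ξ < b) ∧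
      ∀ β₁ ∈ S, ∀ β₂ ∈ S, β₁ ≠ β₂ → Disjoint (y β₁) (y β₂) := by
  classical
  have hbdd : BddAbove S := ⟨(Order.succ lam).ord, fun β hβ => le_of_lt (hS hβ)⟩
  have hlim : ∀ β ∈ S, 0 < β ∧ ∀ γ < β, γ + 1 < β :=
    fun β hβ => mem_limit_aux hδ (hx β hβ)
  have hkey : ∀ β ∈ S, ∀ β' ∈ S, β' < β → ∃ b < β', ∀ ξ ∈ x β, ξ < β' → ξ < b :=
    fun β hβ β' hβ' h => key_bound_aux hδ (hx β hβ) (hx β' hβ') h (hlim β' hβ').2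
  obtain ⟨y, h1, h2⟩ := main_aux S x (fun β hβ => (hx β hβ).1) hlim hkey hnonstat
    (sSup S) 0 ∅
    (fun β hβ h0 _ => ⟨0, h0, fun ξ hξ _ => absurd hξ (Set.notMem_empty ξ)⟩)
  refine ⟨y, fun β hβ => ?_, fun β₁ hβ₁ β₂ hβ₂ hne => ?_⟩
  · have := h1 β hβ (hlim β hβ).1 (le_csSup hbdd hβ)
    exact ⟨this.1, this.2.2.2⟩
  · exact h2 β₁ hβ₁ (hlim β₁ hβ₁).1 (le_csSup hbdd hβ₁)
      β₂ hβ₂ (hlim β₂ hβ₂).1 (le_csSup hbdd hβ₂) hne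
end

section
/- Suppose P is a forcing notion, Ṙ is a P-name for a ≺λ⁺-strategically closed forcing, V^P satisfies GCH at λ (2^λ = λ⁺), and in V^{P} it is forced that U̇ is an R-name for a δ-additive uniform ultrafilter over λ. Then already in V^P there is a δ-additive uniform ultrafilter over λ, obtained by listing all subsets ⟨x_α : α < λ⁺⟩ of λ, building an increasing sequence ⟨r_α : α < λ⁺⟩ of conditions in R with r_α deciding 'x_α ∈ U̇', and setting x_α ∈ U' iff r_α forces x_α ∈ U̇. -/
universe u

open Cardinal

/-- A `κ`-additive (`κ`-complete) ultrafilter. -/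
def IsCompleteUF (κ : Cardinal.{0}) {α : Type u} (U : Ultrafilter α) : Prop :=
  ∀ (ι : Type) (f : ι → Set α), Cardinal.mk ι < κ → (∀ i, f i ∈ U) → (⋂ i, f i) ∈ U

namespace StratAux

open Ordinal Classical

/-- The limit part of an ordinal. -/
noncomputable def Lp (β : Ordinal) : Ordinal := ω * (β / ω)

/-- The natural-number part of an ordinal. -/
noncomputable def Np (β : Ordinal) : ℕ :=
  Classical.choose (Ordinal.lt_omega0.1 (Ordinal.mod_lt β Ordinal.omega0_ne_zero))

lemma Np_spec (β : Ordinal) : β % ω = (Np β : Ordinal) :=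
  Classical.choose_spec (Ordinal.lt_omega0.1 (Ordinal.mod_lt β Ordinal.omega0_ne_zero))

lemma Lp_add_Np (β : Ordinal) : Lp β + (Np β : Ordinal) = β := by
  rw [Lp, ← Np_spec]; exact Ordinal.div_add_mod β ω

lemma Lp_zero_or_limit (β : Ordinal) : Lp β = 0 ∨ Order.IsSuccLimit (Lp β) := by
  rcases eq_or_ne (Lp β) 0 with h | h
  · exact Or.inl h
  · exact Or.inr (Ordinal.isSuccLimit_iff_omega0_dvd.2 ⟨h, dvd_mul_right ω (β / ω)⟩)

lemma decomp_unique {l : Ordinal} {n : ℕ} (hl : l = 0 ∨ Order.IsSuccLimit l) :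
    Lp (l + n) = l ∧ Np (l + n) = n := by
  have hdvd : ω ∣ l := by
    rcases hl with rfl | hl
    · exact dvd_zero ω
    · exact (Ordinal.isSuccLimit_iff_omega0_dvd.1 hl).2
  obtain ⟨m, rfl⟩ := hdvd
  constructor
  · rw [Lp, Ordinal.mul_add_div m Ordinal.omega0_ne_zero,
      Ordinal.div_eq_zero_of_lt (Ordinal.nat_lt_omega0 n), add_zero]
  · have : ((ω * m + n) % ω) = (n : Ordinal) := by
      rw [Ordinal.mul_add_mod_self, Ordinal.mod_eq_of_lt (Ordinal.nat_lt_omega0 n)]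
    have h2 : ((Np (ω * m + n) : Ordinal)) = (n : Ordinal) := by
      rw [← Np_spec, this]
    exact_mod_cast h2

lemma isEvenStage_iff (β : Ordinal) : β.IsEvenStage ↔ Even (Np β) := by
  constructor
  · rintro ⟨l, n, hl, he, rfl⟩
    rwa [(decomp_unique hl).2]
  · intro h
    exact ⟨Lp β, Np β, Lp_zero_or_limit β, h, (Lp_add_Np β).symm⟩

/-- The predecessor of an odd-stage ordinal. -/
noncomputable def oddPred (β : Ordinal) : Ordinal := Lp β + ((2 * (Np β / 2) : ℕ) : Ordinal)

/-- The index decided at odd stage `β`. -/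
noncomputable def target (β : Ordinal) : Ordinal := Lp β + ((Np β / 2 : ℕ) : Ordinal)

lemma oddPred_succ {β : Ordinal} (h : ¬ β.IsEvenStage) :
    oddPred β + 1 = β ∧ oddPred β < β := by
  have hodd : Np β % 2 = 1 := Nat.not_even_iff.1 ((isEvenStage_iff β).not.1 h)
  have hn : Np β = 2 * (Np β / 2) + 1 := by omega
  have h1 : β = Lp β + ((2 * (Np β / 2) + 1 : ℕ) : Ordinal) := by
    rw [← hn, Lp_add_Np]
  have h2 : β = oddPred β + 1 := by
    conv_lhs => rw [h1]
    rw [oddPred, Nat.cast_add, Nat.cast_one, add_assoc]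
  refine ⟨h2.symm, ?_⟩
  conv_rhs => rw [h2]
  exact lt_add_one _

lemma oddPred_lt {β : Ordinal} (h : ¬ β.IsEvenStage) : oddPred β < β :=
  (oddPred_succ h).2

lemma add_nat_lt {o γ : Ordinal} (ho : Order.IsSuccLimit o) (h : γ < o) (n : ℕ) : γ + (n : Ordinal) < o := by
  induction n with
  | zero => simpa using h
  | succ k ih =>
      have : γ + ((k + 1 : ℕ) : Ordinal) = (γ + (k : ℕ)) + 1 := by push_cast; rw [add_assoc]
      rw [this, Ordinal.add_one_eq_succ]
      exact ho.succ_lt ih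

lemma target_surj {o : Ordinal} (ho : Order.IsSuccLimit o) {α : Ordinal} (hα : α < o) :
    ∃ β, β < o ∧ ¬ β.IsEvenStage ∧ target β = α := by
  refine ⟨Lp α + ((2 * Np α + 1 : ℕ) : Ordinal), ?_, ?_, ?_⟩
  · have hLp : Lp α ≤ α := by
      conv_rhs => rw [← Lp_add_Np α]
      exact le_self_add
    exact add_nat_lt ho (lt_of_le_of_lt hLp hα) _
  · rw [isEvenStage_iff, (decomp_unique (Lp_zero_or_limit α)).2]
    simp [Nat.even_add_one, parity_simps]
  · rw [target, (decomp_unique (Lp_zero_or_limit α)).1,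
      (decomp_unique (Lp_zero_or_limit α)).2]
    have : (2 * Np α + 1) / 2 = Np α := by omega
    rw [this, Lp_add_Np]

lemma chain_exists {R : Type u} [Preorder R]
    (σ : (α : Ordinal) → ((β : Ordinal) → β < α → R) → R) (o : Ordinal)
    (hσ : ∀ (α : Ordinal), α < o → ∀ f : (β : Ordinal) → β < α → R,
      FollowsStrategy (· ≤ ·) σ α f → α.IsEvenStage →
      ∀ (β : Ordinal) (hβ : β < α), f β hβ ≤ σ α f)
    (pick : Ordinal → R → R) (hpick : ∀ β r, r ≤ pick β r) :
    ∃ F : Ordinal → R,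
      (∀ γ β, γ ≤ β → β < o → F γ ≤ F β) ∧
      (∀ β, ¬ β.IsEvenStage → F β = pick β (F (oddPred β))) := by
  classical
  let step : (β : Ordinal) → ((γ : Ordinal) → γ < β → R) → R := fun β H =>
    if hE : β.IsEvenStage then σ β H
    else pick β (H (oddPred β) (oddPred_lt hE))
  let F : Ordinal → R := fun β => Ordinal.lt_wf.fix step β
  have hFeq : ∀ β, F β = step β (fun γ _ => F γ) := fun β => Ordinal.lt_wf.fix_eq step β
  have hodd : ∀ β, ¬ β.IsEvenStage → F β = pick β (F (oddPred β)) := by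
    intro β h
    rw [hFeq]
    simp only [step]
    rw [dif_neg h]
  have hmono : ∀ β, β < o → ∀ γ, γ < β → F γ ≤ F β := by
    intro β
    induction β using Ordinal.induction with
    | h β IH =>
      intro hβo γ hγ
      by_cases hE : β.IsEvenStage
      · have hf : FollowsStrategy (· ≤ ·) σ β (fun γ _ => F γ) := by
          constructor
          · intro β' γ' hβ' hγ'
            exact IH β' hβ' (hβ'.trans hβo) γ' hγ'
          · intro β' _ hE'
            show F β' = σ β' (fun γ _ => F γ)
            rw [hFeq β']
            simp only [step]
            rw [dif_pos hE']
        have h1 := hσ β hβo _ hf hE γ hγ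
        have h2 : F β = σ β (fun γ _ => F γ) := by
          rw [hFeq β]; simp only [step]; rw [dif_pos hE]
        rw [h2]
        exact h1
      · have hp := oddPred_succ hE
        have hle : γ ≤ oddPred β := by
          rw [← hp.1] at hγ
          rwa [Ordinal.add_one_eq_succ, Order.lt_succ_iff] at hγ
        rw [hodd β hE]
        rcases lt_or_eq_of_le hle with h | h
        · exact le_trans (IH (oddPred β) hp.2 (hp.2.trans hβo) γ h) (hpick _ _)
        · rw [h]; exact hpick _ _
  refine ⟨F, ?_, hodd⟩
  intro γ β hγβ hβo
  rcases lt_or_eq_of_le hγβ with h | h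
  · exact hmono β hβo γ h
  · rw [h]

end StratAux

/-- (The key argument of Lemma 14.)  Work in `V^P`.  Suppose `R` is a
`≺λ⁺`-strategically closed forcing, GCH holds at `λ` (`2^λ = λ⁺`), and
`U̇` is an `R`-name forced to be a `δ`-additive uniform ultrafilter over `λ`
(`Umem r x` meaning `r ⊩ x ∈ U̇`).  Then already in `V^P` there is a
`δ`-additive uniform ultrafilter over `λ` (obtained by listing all subsets
`⟨x_α : α < λ⁺⟩` of `λ`, building an increasing sequence `⟨r_α : α < λ⁺⟩` of
conditions with `r_α` deciding `x_α ∈ U̇`, and setting `x_α ∈ U'` iff `r_α`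
forces `x_α ∈ U̇`). -/
theorem strategically_closed_cannot_resurrect (δc lam : Cardinal.{0})
    (hδ : δc.IsRegular) (hlam : lam.IsRegular) (hδlt : δc ≤ lam)
    (gch_at_lam : (2 : Cardinal.{0}) ^ lam = Order.succ lam)
    (R : Type u) [Preorder R]
    (hR : GameStratClosed ((· ≤ ·) : R → R → Prop) ((Order.succ lam).ord))
    (Umem : R → Set Ordinal.{0} → Prop)
    -- forcing facts about the name U̇ :
    (hmono : ∀ {r r' x}, Umem r x → r ≤ r' → Umem r' x)
    (hsub : ∀ {r x}, Umem r x → x ⊆ Set.Iio lam.ord)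
    (hdecide : ∀ x : Set Ordinal.{0}, x ⊆ Set.Iio lam.ord → ∀ r : R,
      ∃ r', r ≤ r' ∧ (Umem r' x ∨ Umem r' (Set.Iio lam.ord \ x)))
    (hconsistent : ∀ {r x}, Umem r x → ¬ Umem r (Set.Iio lam.ord \ x))
    (huniform : ∀ {r x}, Umem r x →
      Cardinal.mk ↥x = Cardinal.lift.{1} lam)
    (hadditive : ∀ (r : R) (ι : Type) (f : ι → Set Ordinal.{0}),
      Cardinal.mk ι < δc → (∀ i, Umem r (f i)) →
      ∀ r', r ≤ r' → ∃ r'', r' ≤ r'' ∧ Umem r'' (Set.Iio lam.ord ∩ ⋂ i, f i)) :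
    ∃ U : Ultrafilter ↥(Set.Iio lam.ord),
      IsCompleteUF δc U ∧
      ∀ A : Set ↥(Set.Iio lam.ord), A ∈ U →
        Cardinal.mk ↥A = Cardinal.lift.{1} lam := by
  classical
  obtain ⟨σ, hσ⟩ := hR
  set o : Ordinal.{0} := (Order.succ lam).ord with ho_def
  have hsucc_reg : (Order.succ lam).IsRegular := Cardinal.isRegular_succ hlam.aleph0_le
  have ho : Order.IsSuccLimit o := Cardinal.isSuccLimit_ord hsucc_reg.aleph0_le
  have hmkX : Cardinal.mk ↥(Set.Iio lam.ord) = Cardinal.lift.{1} lam := by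
    rw [Ordinal.mk_Iio_ordinal, Cardinal.card_ord]
  have hcard : Cardinal.mk ↥(Set.Iio o) = Cardinal.mk (Set ↥(Set.Iio lam.ord)) := by
    rw [Ordinal.mk_Iio_ordinal, Cardinal.card_ord, Cardinal.mk_set, hmkX,
      ← Cardinal.lift_two_power, gch_at_lam]
  obtain ⟨e⟩ := Cardinal.eq.1 hcard
  set xOf : Ordinal.{0} → Set Ordinal.{0} :=
    fun α => if h : α < o then Subtype.val '' (e ⟨α, h⟩) else ∅ with hxOf_def
  have him_sub : ∀ s : Set ↥(Set.Iio lam.ord), Subtype.val '' s ⊆ Set.Iio lam.ord := by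
    rintro s a ⟨y, -, rfl⟩; exact y.2
  have hxOf_sub : ∀ α, xOf α ⊆ Set.Iio lam.ord := by
    intro α
    by_cases h : α < o
    · simp only [xOf, dif_pos h]; exact him_sub _
    · simp only [xOf, dif_neg h]; exact Set.empty_subset _
  set pick : Ordinal.{0} → R → R :=
    fun β r => Classical.choose (hdecide (xOf (StratAux.target β)) (hxOf_sub _) r) with hpick_def
  have hpick_spec : ∀ β r, r ≤ pick β r ∧
      (Umem (pick β r) (xOf (StratAux.target β)) ∨
        Umem (pick β r) (Set.Iio lam.ord \ xOf (StratAux.target β))) :=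
    fun β r => Classical.choose_spec (hdecide (xOf (StratAux.target β)) (hxOf_sub _) r)
  obtain ⟨F, hFmono, hFodd⟩ :=
    StratAux.chain_exists σ o hσ pick (fun β r => (hpick_spec β r).1)
  -- every subset of `Iio lam.ord` is decided somewhere along the chain
  have hdec : ∀ x : Set Ordinal.{0}, x ⊆ Set.Iio lam.ord →
      ∃ β, β < o ∧ (Umem (F β) x ∨ Umem (F β) (Set.Iio lam.ord \ x)) := by
    intro x hx
    set s : Set ↥(Set.Iio lam.ord) := Subtype.val ⁻¹' x with hs
    obtain ⟨β, hβo, hβodd, hβt⟩ := StratAux.target_surj ho (e.symm s).2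
    refine ⟨β, hβo, ?_⟩
    have h1 := (hpick_spec β (F (StratAux.oddPred β))).2
    rw [← hFodd β hβodd] at h1
    have h2 : xOf (StratAux.target β) = x := by
      rw [hβt]
      simp only [xOf]
      rw [dif_pos (Set.mem_Iio.1 (e.symm s).2)]
      change Subtype.val '' e (e.symm s) = x
      rw [Equiv.apply_symm_apply, hs,
        Set.image_preimage_eq_inter_range, Subtype.range_coe]
      exact Set.inter_eq_self_of_subset_left hx
    rwa [h2] at h1
  set D : Set Ordinal.{0} → Prop := fun x => ∃ β, β < o ∧ Umem (F β) x with hD_def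
  have hemp : ∀ r : R, ¬ Umem r ∅ := by
    intro r h
    have h0 := huniform h
    rw [Cardinal.mk_emptyCollection] at h0
    exact hlam.pos.ne' (Cardinal.lift_eq_zero.1 h0.symm)
  have hcommon : ∀ (ι : Type) (g : ι → Set Ordinal.{0}), Cardinal.mk ι < Order.succ lam →
      (∀ i, D (g i)) → ∃ β, β < o ∧ ∀ i, Umem (F β) (g i) := by
    intro ι g hι hg
    choose b hb1 hb2 using hg
    have hsup : iSup b < o := Cardinal.iSup_lt_ord_of_isRegular hsucc_reg hι hb1
    exact ⟨iSup b, hsup, fun i =>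
      hmono (hb2 i) (hFmono (b i) _ (le_ciSup (Ordinal.bddAbove_range b) i) hsup)⟩
  have hD_cons : ∀ x, D x → D (Set.Iio lam.ord \ x) → False := by
    rintro x ⟨β₁, hβ₁, h1⟩ ⟨β₂, hβ₂, h2⟩
    have hβ₃ : max β₁ β₂ < o := max_lt hβ₁ hβ₂
    exact hconsistent (hmono h1 (hFmono β₁ _ (le_max_left _ _) hβ₃))
      (hmono h2 (hFmono β₂ _ (le_max_right _ _) hβ₃))
  have hD_inter : ∀ (ι : Type) (g : ι → Set Ordinal.{0}), Cardinal.mk ι < δc →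
      (∀ i, D (g i)) → D (Set.Iio lam.ord ∩ ⋂ i, g i) := by
    intro ι g hι hg
    obtain ⟨β₁, hβ₁, h1⟩ :=
      hcommon ι g (lt_of_lt_of_le hι (hδlt.trans (Order.lt_succ lam).le)) hg
    obtain ⟨β₂, hβ₂, h2⟩ := hdec (Set.Iio lam.ord ∩ ⋂ i, g i) Set.inter_subset_left
    rcases h2 with h2 | h2
    · exact ⟨β₂, hβ₂, h2⟩
    · exfalso
      have hβ₃ : max β₁ β₂ < o := max_lt hβ₁ hβ₂
      have hall : ∀ i, Umem (F (max β₁ β₂)) (g i) :=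
        fun i => hmono (h1 i) (hFmono β₁ _ (le_max_left _ _) hβ₃)
      obtain ⟨r'', hr1, hr2⟩ := hadditive (F (max β₁ β₂)) ι g hι hall (F (max β₁ β₂)) le_rfl
      exact hconsistent hr2
        (hmono (hmono h2 (hFmono β₂ _ (le_max_right _ _) hβ₃)) hr1)
  have haleph2 : Cardinal.mk Bool < δc := by
    rw [Cardinal.mk_bool]
    exact lt_of_lt_of_le (Cardinal.lt_aleph0.2 ⟨2, by norm_num⟩) hδ.aleph0_le
  have hD_up : ∀ x y : Set Ordinal.{0}, D x → x ⊆ y → y ⊆ Set.Iio lam.ord → D y := by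
    intro x y hx hxy hy
    obtain ⟨β₂, hβ₂, h2⟩ := hdec y hy
    rcases h2 with h2 | h2
    · exact ⟨β₂, hβ₂, h2⟩
    · exfalso
      obtain ⟨β₁, hβ₁, h1⟩ := hx
      have hβ₃ : max β₁ β₂ < o := max_lt hβ₁ hβ₂
      have hx3 : Umem (F (max β₁ β₂)) x := hmono h1 (hFmono β₁ _ (le_max_left _ _) hβ₃)
      have hy3 : Umem (F (max β₁ β₂)) (Set.Iio lam.ord \ y) :=
        hmono h2 (hFmono β₂ _ (le_max_right _ _) hβ₃)
      obtain ⟨r'', hr1, hr2⟩ := hadditive (F (max β₁ β₂)) Bool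
        (fun b => if b then x else Set.Iio lam.ord \ y) haleph2
        (by intro b; cases b <;> simpa) (F (max β₁ β₂)) le_rfl
      have hz : (Set.Iio lam.ord ∩ ⋂ b : Bool,
          (if b then x else Set.Iio lam.ord \ y)) = ∅ := by
        ext a
        constructor
        · rintro ⟨-, hm⟩
          have htrue : a ∈ x := by simpa using Set.mem_iInter.1 hm true
          have hfalse : a ∈ Set.Iio lam.ord \ y := by simpa using Set.mem_iInter.1 hm false
          exact absurd (hxy htrue) hfalse.2
        · exact fun h => absurd h (Set.notMem_empty a)
      rw [hz] at hr2
      exact hemp r'' hr2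
  have him_compl : ∀ s : Set ↥(Set.Iio lam.ord),
      Subtype.val '' sᶜ = Set.Iio lam.ord \ Subtype.val '' s := by
    intro s; ext a
    constructor
    · rintro ⟨y, hy, rfl⟩
      refine ⟨y.2, ?_⟩
      rintro ⟨z, hz, hza⟩
      exact hy (Subtype.coe_injective hza ▸ hz)
    · rintro ⟨ha, hna⟩
      exact ⟨⟨a, ha⟩, fun hs => hna ⟨⟨a, ha⟩, hs, rfl⟩, rfl⟩
  have hDuniv : D (Set.Iio lam.ord) := by
    obtain ⟨β, hβ, h⟩ := hdec (Set.Iio lam.ord) (subset_refl _)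
    rcases h with h | h
    · exact ⟨β, hβ, h⟩
    · rw [Set.diff_self] at h; exact absurd h (hemp _)
  set Fil : Filter ↥(Set.Iio lam.ord) :=
    { sets := {A | D (Subtype.val '' A)}
      univ_sets := by
        simp only [Set.mem_setOf_eq, Set.image_univ, Subtype.range_coe]
        exact hDuniv
      sets_of_superset := by
        intro A B hA hAB
        exact hD_up _ _ hA (Set.image_mono hAB) (him_sub B)
      inter_sets := by
        intro A B hA hB
        have h := hD_inter Bool
          (fun b => if b then Subtype.val '' A else Subtype.val '' B) haleph2
          (by intro b; cases b <;> simpa)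
        have hEq : (Set.Iio lam.ord ∩ ⋂ b : Bool,
            (if b then Subtype.val '' A else Subtype.val '' B))
            = Subtype.val '' (A ∩ B) := by
          rw [Set.image_inter Subtype.coe_injective]
          ext a
          constructor
          · rintro ⟨-, hm⟩
            have hA' : a ∈ Subtype.val '' A := by simpa using Set.mem_iInter.1 hm true
            have hB' : a ∈ Subtype.val '' B := by simpa using Set.mem_iInter.1 hm false
            exact ⟨hA', hB'⟩
          · rintro ⟨hA', hB'⟩
            refine ⟨him_sub _ hA', Set.mem_iInter.2 ?_⟩
            intro b; cases b
            · simpa using hB'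
            · simpa using hA' 
        show D (Subtype.val '' (A ∩ B))
        rw [← hEq]
        exact h } with hFil_def
  have hmemFil : ∀ A : Set ↥(Set.Iio lam.ord), A ∈ Fil ↔ D (Subtype.val '' A) :=
    fun A => Iff.rfl
  have hcompl : ∀ s, sᶜ ∉ Fil ↔ s ∈ Fil := by
    intro s
    constructor
    · intro h
      obtain ⟨β, hβ, hd⟩ := hdec (Subtype.val '' s) (him_sub s)
      rcases hd with hd | hd
      · exact (hmemFil s).2 ⟨β, hβ, hd⟩
      · exact absurd ((hmemFil sᶜ).2 (by rw [him_compl]; exact ⟨β, hβ, hd⟩)) h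
    · intro hs hc
      have hc' := (hmemFil sᶜ).1 hc
      rw [him_compl] at hc'
      exact hD_cons _ ((hmemFil s).1 hs) hc'
  refine ⟨Ultrafilter.ofComplNotMemIff Fil hcompl, ?_, ?_⟩
  · intro ι f hι hf
    rcases isEmpty_or_nonempty ι with hι' | hι'
    · rw [Set.iInter_of_empty]
      exact Filter.univ_mem
    · have h := hD_inter ι (fun i => Subtype.val '' f i) hι (fun i => hf i)
      have hEq : (Set.Iio lam.ord ∩ ⋂ i, Subtype.val '' f i)
          = Subtype.val '' ⋂ i, f i := by
        rw [Set.InjOn.image_iInter_eq Subtype.coe_injective.injOn]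
        refine Set.inter_eq_self_of_subset_right ?_
        exact (Set.iInter_subset _ (Classical.arbitrary ι)).trans (him_sub _)
      show D (Subtype.val '' ⋂ i, f i)
      rw [← hEq]
      exact h
  · intro A hA
    obtain ⟨β, hβ, h⟩ := (hmemFil A).1 hA
    have h1 := huniform h
    rwa [Cardinal.mk_image_eq Subtype.coe_injective] at h1
end

section
/- If δ is a measurable cardinal, δ < λ, and δ = sup{ δ' < δ : δ' is λ strongly compact }, then δ is λ strongly compact. -/
open Cardinal

/-- `P_κ(l) = { x ⊆ l : |x| < κ }`. -/
def Pk (κ : Cardinal.{0}) (l : Ordinal.{0}) : Type 1 :=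
  {s : Set Ordinal.{0} // s ⊆ Set.Iio l ∧ Cardinal.mk ↥s < Cardinal.lift.{1} κ}

/-- A fine ultrafilter on `P_κ(l)`. -/
def IsFineUF (κ : Cardinal.{0}) (l : Ordinal.{0}) (U : Ultrafilter (Pk κ l)) : Prop :=
  ∀ γ < l, {x : Pk κ l | γ ∈ x.1} ∈ U

/-- `κ` is `λ` strongly compact: there is a `κ`-complete fine ultrafilter on
`P_κ(λ)`. -/
def IsLamStronglyCompact (κ lam : Cardinal.{0}) : Prop :=
  ∃ U : Ultrafilter (Pk κ lam.ord), IsCompleteUF κ U ∧ IsFineUF κ lam.ord U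

/-- `δ` is measurable: there is a `δ`-complete nonprincipal ultrafilter on `δ`. -/
def IsMeasurableCard (δ : Cardinal.{0}) : Prop :=
  ∃ U : Ultrafilter {α : Ordinal.{0} // α < δ.ord},
    IsCompleteUF δ U ∧ ∀ a, {b | b ≠ a} ∈ U

/-- If `δ` is measurable, `δ < λ`, and `δ` is the supremum of the cardinals
`δ' < δ` which are `λ` strongly compact, then `δ` is `λ` strongly compact. -/
theorem measurable_limit_strongly_compact (δ lam : Cardinal.{0})
    (hdlt : δ < lam)
    (hmeas : IsMeasurableCard δ)
    (hsup : ∀ β < δ.ord, ∃ δ' : Cardinal.{0}, β < δ'.ord ∧ δ' < δ ∧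
      IsLamStronglyCompact δ' lam) :
    IsLamStronglyCompact δ lam := by
  obtain ⟨U, hUc, hUnp⟩ := hmeas
  -- δ is infinite
  have hinf : ℵ₀ ≤ δ := by
    by_contra h
    push_neg at h
    have hfin : Finite {α : Ordinal.{0} // α < δ.ord} := by
      rw [← Cardinal.mk_lt_aleph0_iff]
      have : Cardinal.mk {α : Ordinal.{0} // α < δ.ord} = Cardinal.lift.{1} δ.ord.card :=
        Ordinal.mk_Iio_ordinal δ.ord
      rw [this, Cardinal.card_ord]
      exact Cardinal.lift_lt_aleph0.2 h
    obtain ⟨a, ha⟩ := Ultrafilter.eq_pure_of_finite U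
    have := hUnp a
    rw [ha, Ultrafilter.mem_pure] at this
    exact this rfl
  -- tail sets are in U
  have htail : ∀ γ < δ.ord, {b : {α : Ordinal.{0} // α < δ.ord} | γ < b.1} ∈ U := by
    intro γ hγ
    set ι := (γ + 1).ToType with hι
    have hmkι : Cardinal.mk ι < δ := by
      rw [hι, Cardinal.mk_toType]
      have h1 : γ.card < δ := Cardinal.lt_ord.1 hγ
      rcases lt_or_ge γ.card ℵ₀ with h | h
      · calc (γ + 1).card ≤ γ.card + 1 := Ordinal.card_add γ 1 ▸ by simp
          _ < ℵ₀ := Cardinal.add_lt_aleph0 h Cardinal.one_lt_aleph0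
          _ ≤ δ := hinf
      · calc (γ + 1).card ≤ γ.card + 1 := Ordinal.card_add γ 1 ▸ by simp
          _ = γ.card := by
              rw [Cardinal.add_one_eq h]
          _ < δ := h1
    set g : ι → Ordinal.{0} := fun i => (((Ordinal.ToType.mk (o := γ + 1))).symm i).1 with hg
    have hglt : ∀ i, g i < δ.ord := fun i =>
      lt_of_lt_of_le (((Ordinal.ToType.mk (o := γ + 1))).symm i).2 (by
        rw [Ordinal.add_one_eq_succ, Order.succ_le_iff]; exact hγ)
    have hAll : (⋂ i, {b : {α : Ordinal.{0} // α < δ.ord} | b ≠ ⟨g i, hglt i⟩}) ∈ U :=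
      hUc ι _ hmkι (fun i => hUnp _)
    refine Filter.mem_of_superset hAll ?_
    intro b hb
    simp only [Set.mem_iInter, Set.mem_setOf_eq] at hb ⊢
    by_contra hle
    push_neg at hle
    have hblt : b.1 < γ + 1 := by
      rw [Ordinal.add_one_eq_succ, Order.lt_succ_iff]; exact hle
    have := hb ((Ordinal.ToType.mk (o := γ + 1)) ⟨b.1, hblt⟩)
    apply this
    apply Subtype.ext
    simp [g]
  -- choose witnesses
  have key : ∀ β : {α : Ordinal.{0} // α < δ.ord}, ∃ δ' : Cardinal.{0},
      (β.1 < δ'.ord ∧ δ' < δ) ∧ ∃ W : Ultrafilter (Pk δ' lam.ord),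
        IsCompleteUF δ' W ∧ IsFineUF δ' lam.ord W := by
    intro β
    obtain ⟨δ', h1, h2, h3⟩ := hsup β.1 β.2
    exact ⟨δ', ⟨h1, h2⟩, h3⟩
  choose d hd W hWc hWf using key
  -- embedding
  have hemb : ∀ β, ∀ s : Pk (d β) lam.ord,
      s.1 ⊆ Set.Iio lam.ord ∧ Cardinal.mk ↥s.1 < Cardinal.lift.{1} δ :=
    fun β s => ⟨s.2.1, s.2.2.trans_le (Cardinal.lift_le.2 (hd β).2.le)⟩
  set emb : ∀ β, Pk (d β) lam.ord → Pk δ lam.ord :=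
    fun β s => ⟨s.1, hemb β s⟩ with hembdef
  set V : Ultrafilter (Pk δ lam.ord) :=
    U.bind (fun β => Ultrafilter.map (emb β) (W β)) with hV
  have hmemV : ∀ s : Set (Pk δ lam.ord),
      s ∈ V ↔ {β | (emb β) ⁻¹' s ∈ W β} ∈ U := by
    intro s
    rw [hV]
    change s ∈ Filter.bind ↑U (fun β => ↑(Ultrafilter.map (emb β) (W β))) ↔ _
    rw [Filter.mem_bind']
    rfl
  refine ⟨V, ?_, ?_⟩
  · -- completeness
    intro ι f hι hf
    have hS : ∀ i, {β | (emb β) ⁻¹' (f i) ∈ W β} ∈ U := fun i => (hmemV (f i)).1 (hf i)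
    have hT : {b : {α : Ordinal.{0} // α < δ.ord} | (Cardinal.mk ι).ord < b.1} ∈ U :=
      htail _ (Cardinal.ord_lt_ord.2 hι)
    have hA : ({b : {α : Ordinal.{0} // α < δ.ord} | (Cardinal.mk ι).ord < b.1}
        ∩ ⋂ i, {β | (emb β) ⁻¹' (f i) ∈ W β}) ∈ U :=
      Filter.inter_mem hT (hUc ι _ hι hS)
    rw [hmemV]
    refine Filter.mem_of_superset hA ?_
    rintro β ⟨hβ1, hβ2⟩
    simp only [Set.mem_iInter, Set.mem_setOf_eq] at hβ1 hβ2 ⊢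
    have hιd : Cardinal.mk ι < d β :=
      Cardinal.ord_lt_ord.1 (hβ1.trans (hd β).1)
    have := hWc β ι (fun i => (emb β) ⁻¹' (f i)) hιd hβ2
    rwa [← Set.preimage_iInter] at this
  · -- fineness
    intro γ hγ
    rw [hmemV]
    have : {β : {α : Ordinal.{0} // α < δ.ord} |
        (emb β) ⁻¹' {x : Pk δ lam.ord | γ ∈ x.1} ∈ W β} = Set.univ := by
      ext β
      simp only [Set.mem_setOf_eq, Set.mem_univ, iff_true]
      have : (emb β) ⁻¹' {x : Pk δ lam.ord | γ ∈ x.1} = {x : Pk (d β) lam.ord | γ ∈ x.1} := rfl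
      rw [this]
      exact hWf β γ hγ
    rw [this]
    exact Filter.univ_mem
end
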